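/- arXiv:0910.3091 — 2 statements merged into one kernel-verified Lean document; each statement's English description precedes it below -/
import Mathlib

section
/- Every infinite 0-dimensional compact Hausdorff space K has a very nice bidiscrete system of cardinality d(K), the density of K. -/
open Cardinal

universe u

/-- The density of a topological space: the least cardinality of a dense subset. -/
noncomputable def density (X : Type u) [TopologicalSpace X] : Cardinal.{u} :=
  sInf {c : Cardinal.{u} | ∃ s : Set X, Dense s ∧ #s = c}

/-- A set of pairs of points of `K` is a *very nice bidiscrete system* in `K` if there are
clopen sets, one for each pair `p` in the system, containing the second coordinate of `p`
but not the first coordinate of `p`, and containing either both or neither of the two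
coordinates of every other pair of the system. -/
def IsVeryNiceBidiscrete {K : Type u} [TopologicalSpace K] (S : Set (K × K)) : Prop :=
  ∃ H : S → Set K, ∀ p : S,
    IsClopen (H p) ∧ (p : K × K).2 ∈ H p ∧ (p : K × K).1 ∉ H p ∧
    ∀ q : S, q ≠ p → ((q : K × K).1 ∈ H p ↔ (q : K × K).2 ∈ H p)

/-!
Let `κ = d(K)`; it is infinite. If `K` has `κ` pairwise disjoint nonempty clopen sets, pair them
up as `(U_α, V_α)` and take `x⁰_α ∈ U_α`, `x¹_α ∈ V_α`, `H_α = V_α`.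

Otherwise let `M` be, by Zorn's lemma, a maximal very nice bidiscrete system together with its
clopen sets, and suppose `|M| < κ`. Let `D` be the set of points occurring in `M`. The clopen sets
of `M` separate any two points outside `cl D`: a pair `x ≠ y` they do not separate could be added
to `M`, with a clopen neighbourhood of `y` missing `x` and `cl D`. A maximal disjoint family `𝒲` of
nonempty clopen sets missing `cl D` has fewer than `κ` members and dense union in the complement of
`cl D`. By compactness, picking a point in each nonempty finite Boolean combination of the clopen
sets of `M` gives each `W ∈ 𝒲` a dense subset of size `< κ`. Together with `D` these sets form a
dense set of size `< κ`, a contradiction.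
-/

open Set

namespace Cardinal

theorem mk_finset_lt {α : Type u} {κ : Cardinal.{u}} (hκ : ℵ₀ ≤ κ) (h : #α < κ) :
    #(Finset α) < κ := by
  cases finite_or_infinite α
  · exact (lt_aleph0_of_finite _).trans_le hκ
  · rwa [mk_finset_of_infinite]

end Cardinal

theorem Set.exists_maximal_pairwise {α : Type*} (P : α → Prop) (r : α → α → Prop) :
    ∃ T : Set α, Maximal (fun T => (∀ a ∈ T, P a) ∧ T.Pairwise r) T := by
  refine zorn_subset _ fun c hc hchain => ⟨⋃₀ c, ⟨?_, ?_⟩, fun T hT => subset_sUnion_of_mem hT⟩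
  · rintro a ⟨T, hT, haT⟩
    exact (hc hT).1 a haT
  · exact (pairwise_sUnion hchain.directedOn).2 fun T hT => (hc hT).2

def endpoints {K : Type u} (T : Set ((K × K) × Set K)) : Set K :=
  (fun e => e.1.1) '' T ∪ (fun e => e.1.2) '' T

theorem mk_endpoints_le {K : Type u} (T : Set ((K × K) × Set K)) : #(endpoints T) ≤ #T + #T :=
  (mk_union_le _ _).trans (add_le_add mk_image_le mk_image_le)

section

variable {K : Type u} [TopologicalSpace K]

theorem density_le_mk {s : Set K} (hs : Dense s) : density K ≤ #s :=
  csInf_le (OrderBot.bddBelow _) ⟨s, hs, rfl⟩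

theorem aleph0_le_density [T1Space K] [Infinite K] : ℵ₀ ≤ density K := by
  refine le_csInf ⟨_, univ, dense_univ, rfl⟩ ?_
  rintro _ ⟨s, hs, rfl⟩
  by_contra! hlt
  have hfin : s.Finite := lt_aleph0_iff_set_finite.mp hlt
  exact infinite_univ (hs.closure_eq ▸ hfin.isClosed.closure_eq ▸ hfin)

theorem IsCompact.exists_mk_le_finset_subset_closure {W : Set K} (hW : IsCompact W) {ι : Type u}
    (g : ι → Set K) (hg : ∀ i, IsClosed (g i))
    (hsep : ∀ x ∈ W, ∀ y ∈ W, x ≠ y → ∃ i, x ∈ g i ∧ y ∉ g i) :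
    ∃ E : Set K, #E ≤ #(Finset ι) ∧ W ⊆ closure E := by
  classical
  let F : Finset ι → Set K := fun s => W ∩ ⋂ i ∈ s, g i
  let E := range fun s : {s // (F s).Nonempty} => s.2.some
  refine ⟨E, mk_range_le.trans (mk_subtype_le _), fun x hx => mem_closure_iff.2 ?_⟩
  intro U hU hxU
  -- the `g i` containing `x` cut `W \ U` down to `∅`, and by compactness finitely many suffice
  obtain ⟨u, hu⟩ := (hW.diff hU).elim_finite_subfamily_closed (fun i : {i // x ∈ g i} => g i)
    (fun i => hg i) (by
      refine eq_empty_iff_forall_notMem.2 fun y ⟨⟨hyW, hyU⟩, hy⟩ => ?_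
      obtain ⟨i, hxi, hyi⟩ := hsep x hx y hyW (ne_of_mem_of_not_mem hxU hyU)
      exact hyi (mem_iInter.1 hy ⟨i, hxi⟩))
  have hxF : x ∈ F (u.map (Function.Embedding.subtype _)) := ⟨hx, by simpa using fun i hi _ => hi⟩
  refine ⟨_, ?_, ⟨⟨_, x, hxF⟩, rfl⟩⟩
  obtain ⟨hzW, hz⟩ := Set.Nonempty.some_mem ⟨x, hxF⟩
  by_contra hzU
  refine hu.subset ⟨⟨hzW, hzU⟩, ?_⟩
  simp only [mem_iInter] at hz ⊢
  exact fun i hi => hz i (by simpa using ⟨i.2, hi⟩)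

theorem IsVeryNiceBidiscrete.mono {S T : Set (K × K)} (hS : IsVeryNiceBidiscrete S)
    (hTS : T ⊆ S) : IsVeryNiceBidiscrete T := by
  obtain ⟨H, hH⟩ := hS
  refine ⟨fun p => H (inclusion hTS p), fun p => ?_⟩
  obtain ⟨hclopen, h2, h1, hother⟩ := hH (inclusion hTS p)
  exact ⟨hclopen, h2, h1, fun q hq => hother _ ((inclusion_injective hTS).ne hq)⟩

theorem exists_isVeryNiceBidiscrete_mk_eq {ι : Type u} (x y : ι → K) (H : ι → Set K)
    (hH : ∀ i, IsClopen (H i)) (hy : ∀ i, y i ∈ H i) (hx : ∀ i, x i ∉ H i)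
    (hxy : Pairwise fun i j => (x j ∈ H i ↔ y j ∈ H i)) :
    ∃ S : Set (K × K), IsVeryNiceBidiscrete S ∧ #S = #ι := by
  let f i := (x i, y i)
  have hf : Function.Injective f := by
    intro i j hij
    by_contra hne
    simp only [f, Prod.mk.injEq] at hij
    exact hx i (hij.1 ▸ (hxy hne).2 (hij.2 ▸ hy i))
  let e := Equiv.ofInjective f hf
  refine ⟨range f, ⟨fun p => H (e.symm p), fun p => ?_⟩, mk_range_eq f hf⟩
  obtain ⟨i, rfl⟩ := e.surjective p
  refine ⟨by simpa using hH i, by simpa [e] using hy i, by simpa [e] using hx i, fun q hq => ?_⟩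
  obtain ⟨j, rfl⟩ := e.surjective q
  simpa [e] using hxy fun hij => hq (congrArg e hij.symm)

theorem exists_isVeryNiceBidiscrete_of_pairwise_disjoint {𝒱 : Set (Set K)}
    (h𝒱 : ∀ V ∈ 𝒱, IsClopen V ∧ V.Nonempty) (hdisj : 𝒱.Pairwise Disjoint) (hinf : ℵ₀ ≤ #𝒱) :
    ∃ S : Set (K × K), IsVeryNiceBidiscrete S ∧ #S = #𝒱 := by
  -- pair the members of `𝒱` up and pick one point in each member of a pair
  obtain ⟨e⟩ : Nonempty (𝒱 × Bool ≃ 𝒱) := Cardinal.eq.1 <| by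
    rw [mk_prod, mk_bool, lift_uzero, lift_two]
    exact mul_eq_left hinf (le_trans (by norm_num) hinf) two_ne_zero
  have hne : ∀ a, (e a : Set K).Nonempty := fun a => (h𝒱 _ (e a).2).2
  have hdisj' : ∀ a b, a ≠ b → Disjoint (e a : Set K) (e b) :=
    fun a b hab => hdisj (e a).2 (e b).2 (Subtype.coe_injective.ne (e.injective.ne hab))
  refine exists_isVeryNiceBidiscrete_mk_eq (fun V => (hne (V, false)).some)
    (fun V => (hne (V, true)).some) (fun V => e (V, true)) (fun V => (h𝒱 _ (e _).2).1)
    (fun V => (hne _).some_mem) (fun V hV => ?_) (fun V W hVW => ?_)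
  · exact (hdisj' _ _ (by simp)).ne_of_mem hV (hne _).some_mem rfl
  · refine iff_of_false (fun h => ?_) fun h => ?_
    · exact (hdisj' (V, true) (W, false) (by simp)).ne_of_mem h (hne _).some_mem rfl
    · exact (hdisj' (V, true) (W, true) (by simpa using hVW)).ne_of_mem h (hne _).some_mem rfl

theorem subset_closure_sUnion_of_maximal
    (hbase : TopologicalSpace.IsTopologicalBasis {s : Set K | IsClopen s}) {O : Set K}
    (hO : IsOpen O) {𝒲 : Set (Set K)}
    (h𝒲 : Maximal (fun 𝒱 : Set (Set K) => (∀ V ∈ 𝒱, IsClopen V ∧ V.Nonempty ∧ V ⊆ O) ∧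
      𝒱.Pairwise Disjoint) 𝒲) :
    O ⊆ closure (⋃₀ 𝒲) := by
  intro z hzO
  refine mem_closure_iff.2 fun U hU hzU => ?_
  obtain ⟨V, hV, hzV, hVUO⟩ := hbase.exists_subset_of_mem_open (mem_inter hzU hzO) (hU.inter hO)
  by_contra hUW
  have hVW : Disjoint V (⋃₀ 𝒲) :=
    disjoint_left.2 fun w hwV hwW => hUW ⟨w, (hVUO hwV).1, hwW⟩
  have hVmem : V ∈ 𝒲 := h𝒲.mem_of_prop_insert <| by
    refine ⟨forall_mem_insert.2 ⟨⟨hV, ⟨z, hzV⟩, fun w hw => (hVUO hw).2⟩, h𝒲.prop.1⟩,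
      pairwise_insert.2 ⟨h𝒲.prop.2, fun W hW _ => ?_⟩⟩
    have := hVW.mono_right (subset_sUnion_of_mem hW)
    exact ⟨this, this.symm⟩
  exact hUW ⟨z, hzU, subset_sUnion_of_mem hVmem hzV⟩

/-- A very nice bidiscrete system stored as triples `((x⁰, x¹), H)` together with its witnessing
clopen sets: unlike `IsVeryNiceBidiscrete`, this passes to unions of chains, so Zorn's lemma
applies. -/
def IsVeryNiceBidiscreteFamily (T : Set ((K × K) × Set K)) : Prop :=
  (∀ e ∈ T, IsClopen e.2 ∧ e.1.2 ∈ e.2 ∧ e.1.1 ∉ e.2) ∧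
    T.Pairwise fun e e' => (e'.1.1 ∈ e.2 ↔ e'.1.2 ∈ e.2)

theorem IsVeryNiceBidiscreteFamily.exists_isVeryNiceBidiscrete_mk_eq
    {T : Set ((K × K) × Set K)} (hT : IsVeryNiceBidiscreteFamily T) :
    ∃ S : Set (K × K), IsVeryNiceBidiscrete S ∧ #S = #T :=
  _root_.exists_isVeryNiceBidiscrete_mk_eq (fun e : T => e.1.1.1) (fun e => e.1.1.2)
    (fun e => e.1.2) (fun e => (hT.1 e e.2).1) (fun e => (hT.1 e e.2).2.1)
    (fun e => (hT.1 e e.2).2.2)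
    fun e e' he => hT.2 e.2 e'.2 (Subtype.coe_injective.ne he)

theorem exists_mem_not_iff_of_maximal [T1Space K]
    (hbase : TopologicalSpace.IsTopologicalBasis {s : Set K | IsClopen s})
    {M : Set ((K × K) × Set K)} (hM : Maximal IsVeryNiceBidiscreteFamily M) {x y : K}
    (hxy : x ≠ y) (hy : y ∉ closure (endpoints M)) : ∃ e ∈ M, ¬(x ∈ e.2 ↔ y ∈ e.2) := by
  by_contra! hsame
  -- otherwise `(x, y)` joins `M`, with a clopen set around `y` avoiding `x` and all endpoints
  obtain ⟨V, hV, hyV, hVsub⟩ := hbase.exists_subset_of_mem_open (a := y)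
    (u := (closure (endpoints M) ∪ {x})ᶜ) (by simp [hy, hxy.symm])
    (isClosed_closure.union isClosed_singleton).isOpen_compl
  have hV_endpoints : ∀ z ∈ endpoints M, z ∉ V :=
    fun z hz hzV => hVsub hzV (Or.inl (subset_closure hz))
  have hmem : ((x, y), V) ∈ M := hM.mem_of_prop_insert <| by
    refine ⟨forall_mem_insert.2 ⟨⟨hV, hyV, fun hxV => hVsub hxV (Or.inr rfl)⟩, hM.prop.1⟩,
      pairwise_insert.2 ⟨hM.prop.2, fun e he _ => ⟨?_, hsame e he⟩⟩⟩
    exact iff_of_false (hV_endpoints _ (Or.inl ⟨e, he, rfl⟩))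
      (hV_endpoints _ (Or.inr ⟨e, he, rfl⟩))
  exact hy (subset_closure (Or.inr ⟨_, hmem, rfl⟩))

theorem exists_mk_le_finset_subset_closure_of_maximal [T1Space K]
    (hbase : TopologicalSpace.IsTopologicalBasis {s : Set K | IsClopen s})
    {M : Set ((K × K) × Set K)} (hM : Maximal IsVeryNiceBidiscreteFamily M) {W : Set K}
    (hW : IsCompact W) (hWM : W ⊆ (closure (endpoints M))ᶜ) :
    ∃ E : Set K, #E ≤ #(Finset (M ⊕ M)) ∧ W ⊆ closure E := by
  refine hW.exists_mk_le_finset_subset_closure (Sum.elim (fun e => e.1.2) fun e => (e.1.2)ᶜ)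
    (fun i => ?_) fun x _ y hy hxy => ?_
  · cases i <;> simp [(hM.prop.1 _ (Subtype.prop _)).1.isClosed,
      (hM.prop.1 _ (Subtype.prop _)).1.isOpen]
  obtain ⟨e, he, hsep⟩ := exists_mem_not_iff_of_maximal hbase hM hxy (hWM hy)
  by_cases hx : x ∈ e.2
  · exact ⟨.inl ⟨e, he⟩, hx, fun hy => hsep (iff_of_true hx hy)⟩
  · exact ⟨.inr ⟨e, he⟩, hx, fun hy => hsep (iff_of_false hx hy)⟩

theorem density_le_mk_of_maximal [CompactSpace K] [T1Space K] [Infinite K]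
    (hbase : TopologicalSpace.IsTopologicalBasis {s : Set K | IsClopen s})
    (hcell : ∀ 𝒱 : Set (Set K), (∀ V ∈ 𝒱, IsClopen V ∧ V.Nonempty) → 𝒱.Pairwise Disjoint →
      #𝒱 < density K)
    {M : Set ((K × K) × Set K)} (hM : Maximal IsVeryNiceBidiscreteFamily M) :
    density K ≤ #M := by
  by_contra! hMκ
  have hκ : ℵ₀ ≤ density K := aleph0_le_density
  have hMM : #M + #M < density K := add_lt_of_lt hκ hMκ hMκ
  set D := closure (endpoints M)
  obtain ⟨𝒲, h𝒲⟩ :=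
    exists_maximal_pairwise (fun V : Set K => IsClopen V ∧ V.Nonempty ∧ V ⊆ Dᶜ) Disjoint
  have h𝒲κ : #𝒲 < density K :=
    hcell 𝒲 (fun V hV => ⟨(h𝒲.prop.1 V hV).1, (h𝒲.prop.1 V hV).2.1⟩) h𝒲.prop.2
  have hsmall (W : 𝒲) :
      ∃ E : Set K, #E ≤ #(Finset (M ⊕ M)) ∧ (W : Set K) ⊆ closure E :=
    exists_mk_le_finset_subset_closure_of_maximal hbase hM (h𝒲.prop.1 W W.2).1.isClosed.isCompact
      (h𝒲.prop.1 W W.2).2.2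
  choose E hE hWE using hsmall
  have hcover : Dᶜ ⊆ closure (⋃ W, E W) :=
    (subset_closure_sUnion_of_maximal hbase isClosed_closure.isOpen_compl h𝒲).trans <|
      closure_minimal (sUnion_subset fun W hW => (hWE ⟨W, hW⟩).trans
        (closure_mono (subset_iUnion E _))) isClosed_closure
  have hdense : Dense (endpoints M ∪ ⋃ W, E W) := by
    rw [dense_iff_closure_eq, closure_union, eq_univ_iff_forall]
    exact fun z => (em (z ∈ D)).imp id fun hz => hcover hz
  refine (density_le_mk hdense).not_gt ?_
  calc #(endpoints M ∪ ⋃ W, E W : Set K) ≤ #(endpoints M) + #𝒲 * #(Finset (M ⊕ M)) :=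
        (mk_union_le _ _).trans <| add_le_add le_rfl <|
          (mk_iUnion_le E).trans (mul_le_mul' le_rfl (ciSup_le' hE))
    _ < density K := by
      refine add_lt_of_lt hκ ((mk_endpoints_le M).trans_lt hMM) (mul_lt_of_lt hκ h𝒲κ ?_)
      exact mk_finset_lt hκ (by rwa [mk_sum, lift_id])

end

/-- Every infinite 0-dimensional compact Hausdorff space `K` (i.e. one whose clopen sets
form a base for the topology) has a very nice bidiscrete system of cardinality `d(K)`,
the density of `K`. -/
theorem every_infinite_zero_dim_compactum_has_very_nice_bidiscrete_system_of_density_size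
    (K : Type u) [TopologicalSpace K] [CompactSpace K] [T2Space K] [Infinite K]
    (hbase : TopologicalSpace.IsTopologicalBasis {s : Set K | IsClopen s}) :
    ∃ S : Set (K × K), IsVeryNiceBidiscrete S ∧ #S = density K := by
  suffices ∃ S : Set (K × K), IsVeryNiceBidiscrete S ∧ density K ≤ #S by
    obtain ⟨S, hS, hle⟩ := this
    obtain ⟨T, hTS, hT⟩ := le_mk_iff_exists_subset.1 hle
    exact ⟨T, hS.mono hTS, hT⟩
  by_cases hcell : ∃ 𝒱 : Set (Set K), (∀ V ∈ 𝒱, IsClopen V ∧ V.Nonempty) ∧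
      𝒱.Pairwise Disjoint ∧ density K ≤ #𝒱
  · obtain ⟨𝒱, h𝒱, hdisj, hle⟩ := hcell
    obtain ⟨S, hS, hS𝒱⟩ :=
      exists_isVeryNiceBidiscrete_of_pairwise_disjoint h𝒱 hdisj (aleph0_le_density.trans hle)
    exact ⟨S, hS, hS𝒱 ▸ hle⟩
  · push Not at hcell
    obtain ⟨M, hM⟩ : ∃ M, Maximal (IsVeryNiceBidiscreteFamily (K := K)) M :=
      exists_maximal_pairwise _ _
    obtain ⟨S, hS, hSM⟩ := hM.prop.exists_isVeryNiceBidiscrete_mk_eq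
    exact ⟨S, hS, hSM ▸ density_le_mk_of_maximal hbase hcell hM⟩
end

section
/- Let K be a non-empty closed subset of 2^{ω₁} satisfying conditions (R4) and (R8). Then the map φ : K → 2^ω defined by φ(x) = x↾ω is (at most) 2-to-1, i.e., for every t ∈ 2^ω the fiber {x ∈ K : x↾ω = t} has at most two elements. -/
/-!
Two distinct points of a fiber of `x ↦ x↾ω` first differ at some level `α` with
`ω ≤ α < ω₁`, and by (R4)(ii) they both pass through the split point `s_α`. By (R8) a point
passes through at most one split point, so every other point of the fiber splits off from a
given point `x` at the same level, and on the same side since coordinates are Booleans. Two such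
points would then split off from each other at a higher level, which (R8) forbids.
-/

noncomputable section

open Cardinal Set

/-- The first uncountable ordinal `ω₁`. -/
def ω1 : Ordinal.{0} := (Cardinal.aleph 1).ord

/-- We represent an element of the Cantor cube `2^α` (for an ordinal `α`) as a function
`Ordinal → Bool` vanishing on coordinates `≥ α`. `truncate α x` is the restriction
`x↾α` of `x` to `α` in this representation. -/
def truncate (α : Ordinal.{0}) (x : Ordinal.{0} → Bool) : Ordinal.{0} → Bool :=
  fun β => if β < α then x β else false

/-- Condition (R4) for `K ⊆ 2^{ω₁}` with split points `s_α ∈ 2^α` (for `ω ≤ α < ω₁`):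
(i) both extensions of `s_α` by `0` and by `1` at coordinate `α` belong to
`K_{α+1} = {x↾(α+1) : x ∈ K}`, and (ii) whenever `u, v ∈ K_{α+1}` satisfy `u↾α = v↾α`
and `u(α) ≠ v(α)`, then `u↾α = s_α`. -/
def CondR4 (K : Set (Ordinal.{0} → Bool)) (s : Ordinal.{0} → Ordinal.{0} → Bool) : Prop :=
  ∀ α : Ordinal.{0}, Ordinal.omega0 ≤ α → α < ω1 →
    truncate α (s α) = s α ∧
    (∀ b : Bool, Function.update (s α) α b ∈ truncate (α + 1) '' K) ∧
    (∀ u ∈ truncate (α + 1) '' K, ∀ v ∈ truncate (α + 1) '' K,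
      truncate α u = truncate α v → u α ≠ v α → truncate α u = s α)

/-- Condition (R8): whenever `ω ≤ α < β < ω₁`, `s_β↾α ≠ s_α`. -/
def CondR8 (s : Ordinal.{0} → Ordinal.{0} → Bool) : Prop :=
  ∀ α β : Ordinal.{0}, Ordinal.omega0 ≤ α → α < β → β < ω1 →
    truncate α (s β) ≠ s α


open Ordinal

lemma truncate_truncate {α β : Ordinal.{0}} (h : α ≤ β) (x : Ordinal.{0} → Bool) :
    truncate α (truncate β x) = truncate α x := by
  funext γ
  by_cases hγ : γ < α
  · simp [truncate, hγ, hγ.trans_le h]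
  · simp [truncate, hγ]

lemma truncate_apply_of_lt {α β : Ordinal.{0}} (h : β < α) (x : Ordinal.{0} → Bool) :
    truncate α x β = x β :=
  if_pos h

lemma truncate_apply_of_le {α β : Ordinal.{0}} (h : α ≤ β) (x : Ordinal.{0} → Bool) :
    truncate α x β = false :=
  if_neg h.not_gt

/-- The first coordinate at which `x` and `y` differ (junk value `0` when `x = y`). -/
def firstDiff (x y : Ordinal.{0} → Bool) : Ordinal.{0} :=
  sInf {β | x β ≠ y β}

section firstDiff

variable {x y : Ordinal.{0} → Bool}

lemma apply_firstDiff_ne (h : x ≠ y) : x (firstDiff x y) ≠ y (firstDiff x y) :=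
  csInf_mem (s := {β | x β ≠ y β}) (Function.ne_iff.mp h)

lemma apply_eq_of_lt_firstDiff {β : Ordinal.{0}} (h : β < firstDiff x y) : x β = y β :=
  not_not.mp (notMem_of_lt_csInf' h)

lemma truncate_firstDiff : truncate (firstDiff x y) x = truncate (firstDiff x y) y := by
  funext β
  by_cases hβ : β < firstDiff x y
  · simp [truncate, hβ, apply_eq_of_lt_firstDiff hβ]
  · simp [truncate, hβ]

lemma le_firstDiff {α : Ordinal.{0}} (hxy : truncate α x = truncate α y) (h : x ≠ y) :
    α ≤ firstDiff x y := by
  by_contra! hlt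
  apply apply_firstDiff_ne h
  rw [← truncate_apply_of_lt hlt x, hxy, truncate_apply_of_lt hlt]

lemma firstDiff_lt {α : Ordinal.{0}} (hx : truncate α x = x) (hy : truncate α y = y)
    (h : x ≠ y) : firstDiff x y < α := by
  by_contra! hle
  apply apply_firstDiff_ne h
  rw [← congrFun hx, ← congrFun hy, truncate_apply_of_le hle, truncate_apply_of_le hle]

end firstDiff

lemma CondR4.truncate_eq_of_apply_ne {K : Set (Ordinal.{0} → Bool)}
    {s : Ordinal.{0} → Ordinal.{0} → Bool} (hR4 : CondR4 K s) {α : Ordinal.{0}}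
    (hωα : ω ≤ α) (hαω1 : α < ω1) {x y : Ordinal.{0} → Bool} (hx : x ∈ K) (hy : y ∈ K)
    (hxy : truncate α x = truncate α y) (hne : x α ≠ y α) : truncate α x = s α := by
  have hα : α ≤ α + 1 := le_self_add
  have hsplit := (hR4 α hωα hαω1).2.2 _ ⟨x, hx, rfl⟩ _ ⟨y, hy, rfl⟩
    (by rw [truncate_truncate hα, truncate_truncate hα, hxy])
    (by rwa [truncate_apply_of_lt (lt_add_one α), truncate_apply_of_lt (lt_add_one α)])
  rwa [truncate_truncate hα] at hsplit

lemma CondR8.eq_of_truncate_eq {s : Ordinal.{0} → Ordinal.{0} → Bool} (hR8 : CondR8 s)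
    {x : Ordinal.{0} → Bool} {α β : Ordinal.{0}} (hωα : ω ≤ α) (hωβ : ω ≤ β)
    (hαω1 : α < ω1) (hβω1 : β < ω1) (hα : truncate α x = s α) (hβ : truncate β x = s β) :
    α = β := by
  by_contra hne
  rcases lt_or_gt_of_ne hne with h | h
  · exact hR8 α β hωα h hβω1 (by rw [← hβ, truncate_truncate h.le, hα])
  · exact hR8 β α hωβ h hαω1 (by rw [← hα, truncate_truncate h.le, hβ])

section fiber

variable {K : Set (Ordinal.{0} → Bool)} {s : Ordinal.{0} → Ordinal.{0} → Bool}
  {x y z : Ordinal.{0} → Bool}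

lemma truncate_firstDiff_eq_split (hKsub : ∀ x ∈ K, truncate ω1 x = x) (hR4 : CondR4 K s)
    (hx : x ∈ K) (hy : y ∈ K) (hxy : truncate ω x = truncate ω y) (hne : x ≠ y) :
    ω ≤ firstDiff x y ∧ firstDiff x y < ω1 ∧ truncate (firstDiff x y) x = s (firstDiff x y) :=
  have hω := le_firstDiff hxy hne
  have hω1 := firstDiff_lt (hKsub x hx) (hKsub y hy) hne
  ⟨hω, hω1, hR4.truncate_eq_of_apply_ne hω hω1 hx hy truncate_firstDiff (apply_firstDiff_ne hne)⟩

lemma eq_of_ne_of_ne_of_truncate_omega_eq (hKsub : ∀ x ∈ K, truncate ω1 x = x)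
    (hR4 : CondR4 K s) (hR8 : CondR8 s) (hx : x ∈ K) (hy : y ∈ K) (hz : z ∈ K)
    (hxy : truncate ω x = truncate ω y) (hxz : truncate ω x = truncate ω z)
    (hyx : y ≠ x) (hzx : z ≠ x) : y = z := by
  by_contra hyz
  obtain ⟨hωα, hαω1, hα⟩ := truncate_firstDiff_eq_split hKsub hR4 hx hy hxy hyx.symm
  obtain ⟨hωβ, hβω1, hβ⟩ := truncate_firstDiff_eq_split hKsub hR4 hx hz hxz hzx.symm
  obtain ⟨hωγ, hγω1, hγ⟩ :=
    truncate_firstDiff_eq_split hKsub hR4 hy hz (hxy.symm.trans hxz) hyz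
  set α := firstDiff x y
  have hβα : firstDiff x z = α := hR8.eq_of_truncate_eq hωβ hωα hβω1 hαω1 hβ hα
  have hyzα : y α = z α := by
    have hxzα := apply_firstDiff_ne hzx.symm
    rw [hβα] at hxzα
    exact (Bool.eq_not_of_ne (apply_firstDiff_ne hyx.symm).symm).trans
      (Bool.eq_not_of_ne hxzα.symm).symm
  have hyα : truncate α y = s α := by rw [← truncate_firstDiff]; exact hα
  have hαγ := hR8.eq_of_truncate_eq hωα hωγ hαω1 hγω1 hyα hγ
  exact apply_firstDiff_ne hyz (hαγ ▸ hyzα)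

end fiber

theorem restriction_to_omega_two_to_one_general
    (K : Set (Ordinal.{0} → Bool))
    (hKsub : ∀ x ∈ K, truncate ω1 x = x)
    (s : Ordinal.{0} → Ordinal.{0} → Bool) (hR4 : CondR4 K s) (hR8 : CondR8 s)
    (t : Ordinal.{0} → Bool) :
    {x ∈ K | truncate Ordinal.omega0 x = t}.encard ≤ 2 := by
  set S := {x ∈ K | truncate ω x = t}
  obtain hS | ⟨x, hx⟩ := S.eq_empty_or_nonempty
  · simp [hS]
  have hrest : (S \ {x}).encard ≤ 1 := by
    refine Set.encard_le_one_iff.mpr fun y z ⟨⟨hy, hyt⟩, hyx⟩ ⟨⟨hz, hzt⟩, hzx⟩ => ?_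
    exact eq_of_ne_of_ne_of_truncate_omega_eq hKsub hR4 hR8 hx.1 hy hz (hx.2.trans hyt.symm)
      (hx.2.trans hzt.symm) hyx hzx
  calc S.encard = (S \ {x}).encard + 1 := (Set.encard_sdiff_singleton_add_one hx).symm
    _ ≤ 1 + 1 := by gcongr
    _ = 2 := one_add_one_eq_two

/-- Let `K` be a non-empty closed subset of `2^{ω₁}` satisfying conditions (R4) and (R8)
with split points `s_α`. Then the map `φ : K → 2^ω`, `φ(x) = x↾ω`, is (at most) 2-to-1:
for every `t ∈ 2^ω` the fiber `{x ∈ K : x↾ω = t}` has at most two elements. -/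
theorem restriction_to_omega_two_to_one
    (K : Set (Ordinal.{0} → Bool)) (hKne : K.Nonempty) (hKcl : IsClosed K)
    (hKsub : ∀ x ∈ K, truncate ω1 x = x)
    (s : Ordinal.{0} → Ordinal.{0} → Bool) (hR4 : CondR4 K s) (hR8 : CondR8 s)
    (t : Ordinal.{0} → Bool) (ht : truncate Ordinal.omega0 t = t) :
    {x ∈ K | truncate Ordinal.omega0 x = t}.encard ≤ 2 :=
  restriction_to_omega_two_to_one_general K hKsub s hR4 hR8 t

end
end
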